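/- arXiv:2506.19869 — 10 statements merged into one kernel-verified Lean document; each statement's English description precedes it below -/
import Mathlib

section
/- Let (S, V, E, I, T, R) : [0, ∞) → ℝ⁶ be a differentiable solution of the SVEITRS system with initial conditions S(0) > 0, V(0) ≥ 0, E(0) ≥ 0, I(0) ≥ 0, T(0) ≥ 0, R(0) ≥ 0. Then S(t) ≥ 0, V(t) ≥ 0, E(t) ≥ 0, I(t) ≥ 0, T(t) ≥ 0 and R(t) ≥ 0 for all t ≥ 0. -/
open Set Filter Topology Metric
open scoped NNReal

/-!
Proof idea. The SVEITRS vector field `F` is quasi-positive: if `y ≥ 0` and `yᵢ = 0`, then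
`Fᵢ(y) ≥ 0`. Being polynomial, `F` is Lipschitz with some constant `L` on a ball containing the
trajectory over `[0, t]`, so at a negative minimal component `yᵢ` one still has
`Fᵢ(y) ≥ Fᵢ(max y 0) - L |yᵢ| ≥ L yᵢ`. Hence `x + ε e^{(L+1)s}` cannot leave the open positive
orthant: at the first time a component vanishes its derivative would be positive. Letting
`ε → 0` gives `x(t) ≥ 0`.
-/

theorem HasDerivAt.eventually_nhdsLT_lt {f : ℝ → ℝ} {f' x : ℝ} (hf : HasDerivAt f f' x)
    (hf' : 0 < f') : ∀ᶠ y in 𝓝[<] x, f y < f x := by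
  filter_upwards [(hasDerivAt_iff_tendsto_slope_left_right.1 hf).1.eventually
    (eventually_gt_nhds hf'), self_mem_nhdsWithin] with y hslope hy
  rw [slope_comm, slope_def_field] at hslope
  exact sub_pos.1 ((div_pos_iff_of_pos_right (sub_pos.2 hy)).1 hslope)

section Orthant

variable {ι : Type*} [Fintype ι]

theorem pos_of_hasDerivAt_of_deriv_pos {x x' : ℝ → ι → ℝ} {a b : ℝ}
    (hx : ∀ s ∈ Icc a b, HasDerivAt x (x' s) s) (ha : ∀ i, 0 < x a i)
    (hx' : ∀ s ∈ Ioc a b, 0 ≤ x s → ∀ i, x s i = 0 → 0 < x' s i) :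
    ∀ s ∈ Icc a b, ∀ i, 0 < x s i := by
  have hcont (i : ι) : ContinuousOn (fun s => x s i) (Icc a b) := fun s hs =>
    (hasDerivAt_pi.1 (hx s hs) i).continuousAt.continuousWithinAt
  set A := ⋃ i, Icc a b ∩ (fun s => x s i) ⁻¹' Iic 0
  have hA : IsClosed A := isClosed_iUnion_of_finite fun i =>
    (hcont i).preimage_isClosed_of_isClosed isClosed_Icc isClosed_Iic
  by_contra! hbad
  obtain ⟨s, hs, i, hsi⟩ := hbad
  have hne : A.Nonempty := ⟨s, mem_iUnion.2 ⟨i, hs, hsi⟩⟩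
  have hbdd : BddBelow A := bddBelow_Icc.mono (iUnion_subset fun _ => inter_subset_left)
  -- `t₀` is the first time at which some component reaches `0`.
  obtain ⟨j, ⟨hle, ht₀b⟩, hj⟩ := mem_iUnion.1 (hA.csInf_mem hne hbdd)
  set t₀ := sInf A
  have hbefore : ∀ s ∈ Ico a t₀, ∀ i, 0 < x s i := fun s hs i => by
    by_contra! h
    exact (csInf_le hbdd (mem_iUnion.2 ⟨i, ⟨hs.1, hs.2.le.trans ht₀b⟩, h⟩)).not_gt hs.2
  have hat₀ : a < t₀ := hle.lt_of_ne fun h => (ha j).not_ge (h ▸ hj)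
  have hderiv (i : ι) : HasDerivAt (fun s => x s i) (x' t₀ i) t₀ :=
    hasDerivAt_pi.1 (hx t₀ ⟨hat₀.le, ht₀b⟩) i
  have hleft : Ioo a t₀ ∈ 𝓝[<] t₀ := Ioo_mem_nhdsLT hat₀
  have hnonneg : 0 ≤ x t₀ := fun i =>
    ge_of_tendsto ((hderiv i).continuousAt.tendsto.mono_left nhdsWithin_le_nhds)
      (mem_of_superset hleft fun s hs => (hbefore s (Ioo_subset_Ico_self hs) i).le)
  have hzero : x t₀ j = 0 := le_antisymm hj (hnonneg j)
  obtain ⟨s, hlt, hs⟩ := (((hderiv j).eventually_nhdsLT_lt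
    (hx' t₀ ⟨hat₀, ht₀b⟩ hnonneg j hzero)).and hleft).exists
  exact (hbefore s (Ioo_subset_Ico_self hs) j).not_ge (hzero ▸ hlt.le)

theorem nonneg_of_hasDerivAt_of_mul_lt_deriv {x x' : ℝ → ι → ℝ} {a b K : ℝ}
    (hx : ∀ s ∈ Icc a b, HasDerivAt x (x' s) s) (ha : 0 ≤ x a)
    (hK : ∀ s ∈ Ioc a b, ∀ i, x s i < 0 → (∀ j, x s i ≤ x s j) → K * x s i < x' s i) :
    ∀ s ∈ Icc a b, 0 ≤ x s := by
  have hpert : ∀ ε > 0, ∀ s ∈ Icc a b, ∀ i, 0 < x s i + ε * Real.exp (K * (s - a)) := by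
    intro ε hε
    set φ := fun s => ε * Real.exp (K * (s - a))
    have hφ (s : ℝ) : HasDerivAt φ (K * φ s) s := by
      refine ((((hasDerivAt_id' s).sub_const a).const_mul K).exp.const_mul ε).congr_deriv ?_
      simp only [φ]
      ring
    refine pos_of_hasDerivAt_of_deriv_pos (x := fun s i => x s i + φ s)
      (x' := fun s i => x' s i + K * φ s)
      (fun s hs => hasDerivAt_pi.2 fun i => (hasDerivAt_pi.1 (hx s hs) i).add (hφ s))
      (fun i => by simpa [φ] using add_pos_of_nonneg_of_pos (ha i) hε) ?_
    intro s hs hnonneg i hi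
    have hφpos : 0 < φ s := by positivity
    have hmin (j : ι) : x s i ≤ x s j := by
      have : 0 ≤ x s j + φ s := hnonneg j
      linarith
    have hxi : x s i = -φ s := by linarith
    have hderiv := hK s hs i (by linarith) hmin
    rw [hxi] at hderiv
    linarith
  intro s hs i
  refine le_of_forall_pos_lt_add fun δ hδ => ?_
  have := hpert (δ / Real.exp (K * (s - a))) (by positivity) s hs i
  rwa [div_mul_cancel₀ _ (Real.exp_pos _).ne'] at this

def QuasiPositive (F : (ι → ℝ) → ι → ℝ) : Prop :=
  ∀ y, 0 ≤ y → ∀ i, y i = 0 → 0 ≤ F y i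

theorem QuasiPositive.mul_le_apply {F : (ι → ℝ) → ι → ℝ} (hF : QuasiPositive F) {L : ℝ≥0}
    {M : ℝ} (hL : LipschitzOnWith L F (closedBall 0 M)) {y : ι → ℝ} (hy : ‖y‖ ≤ M) {i : ι}
    (hi : y i ≤ 0) (hmin : ∀ j, y i ≤ y j) : L * y i ≤ F y i := by
  have hpos : 0 ≤ y ⊔ 0 := le_sup_right
  have hpos_i : (y ⊔ 0) i = 0 := max_eq_right hi
  have hM : 0 ≤ M := (norm_nonneg y).trans hy
  have hnorm : ‖y ⊔ 0‖ ≤ M := by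
    refine (pi_norm_le_iff_of_nonneg hM).2 fun j => ?_
    have hj : |y j| ≤ M := (norm_le_pi_norm y j).trans hy
    rw [Pi.sup_apply, Pi.zero_apply, Real.norm_eq_abs, abs_le]
    exact ⟨(neg_nonpos.2 hM).trans (le_max_right _ _), max_le (le_abs_self _ |>.trans hj) hM⟩
  have hdist : dist y (y ⊔ 0) ≤ -y i := by
    refine (dist_pi_le_iff (by linarith)).2 fun j => ?_
    rw [Real.dist_eq, Pi.sup_apply, Pi.zero_apply, abs_le]
    constructor <;> cases max_cases (y j) 0 <;> linarith [hmin j]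
  have hFdist := hL.dist_le_mul y (mem_closedBall_zero_iff.2 hy) _ (mem_closedBall_zero_iff.2 hnorm)
  have hcomp := dist_le_pi_dist (F y) (F (y ⊔ 0)) i
  rw [Real.dist_eq, abs_le] at hcomp
  nlinarith [hF _ hpos i hpos_i, L.coe_nonneg]

theorem QuasiPositive.nonneg_of_hasDerivAt {F : (ι → ℝ) → ι → ℝ} (hF : QuasiPositive F)
    (hFL : LocallyLipschitz F) {x : ℝ → ι → ℝ} {a b : ℝ}
    (hx : ∀ s ∈ Icc a b, HasDerivAt x (F (x s)) s) (ha : 0 ≤ x a) :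
    ∀ s ∈ Icc a b, 0 ≤ x s := by
  obtain ⟨M, hM⟩ := isCompact_Icc.exists_bound_of_continuousOn fun s hs =>
    (hx s hs).continuousAt.continuousWithinAt
  obtain ⟨L, hL⟩ := hFL.locallyLipschitzOn.exists_lipschitzOnWith_of_compact
    (isCompact_closedBall (0 : ι → ℝ) M)
  refine nonneg_of_hasDerivAt_of_mul_lt_deriv (K := L + 1) hx ha fun s hs i hi hmin => ?_
  have := hF.mul_le_apply hL (hM s (Ioc_subset_Icc_self hs)) hi.le hmin
  linarith

end Orthant

section SVEITRS

variable (Λ β γ μ π η θ δ τ α ω : ℝ)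

/-- The compartments `S, V, E, I, T, R` are the coordinates `0, …, 5`. -/
def sveitrsField (y : Fin 6 → ℝ) : Fin 6 → ℝ :=
  ![Λ + η * y 5 + θ * y 1 - (β * y 3 + π + μ) * y 0,
    π * y 0 - (θ + μ) * y 1,
    β * y 0 * y 3 - (γ + μ) * y 2,
    γ * y 2 - (δ + τ + μ) * y 3,
    δ * y 3 - (α + ω + μ) * y 4,
    α * y 4 - (η + μ) * y 5]

theorem sveitrsField_contDiff : ContDiff ℝ 1 (sveitrsField Λ β γ μ π η θ δ τ α ω) := by
  refine contDiff_pi.2 fun i => ?_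
  fin_cases i <;> simp [sveitrsField] <;> fun_prop

variable {Λ β γ μ π η θ δ τ α ω}

theorem sveitrsField_quasiPositive (hΛ : 0 ≤ Λ) (hβ : 0 ≤ β) (hγ : 0 ≤ γ) (hπ : 0 ≤ π)
    (hη : 0 ≤ η) (hθ : 0 ≤ θ) (hδ : 0 ≤ δ) (hα : 0 ≤ α) :
    QuasiPositive (sveitrsField Λ β γ μ π η θ δ τ α ω) := by
  intro y hy i hi
  have h (j : Fin 6) : 0 ≤ y j := hy j
  fin_cases i <;> simp only [sveitrsField, Fin.zero_eta, Fin.mk_one, Fin.reduceFinMk, Fin.isValue,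
    Matrix.cons_val_zero, Matrix.cons_val_one, Matrix.cons_val] at hi ⊢ <;> rw [hi, mul_zero] <;>
    linarith [mul_nonneg hη (h 5), mul_nonneg hθ (h 1), mul_nonneg hπ (h 0),
      mul_nonneg (mul_nonneg hβ (h 0)) (h 3), mul_nonneg hγ (h 2), mul_nonneg hδ (h 3),
      mul_nonneg hα (h 4)]

end SVEITRS


theorem sveitrs_positivity_general
    (Λ β γ μ π η θ δ τ α ω : ℝ)
    (hΛ : 0 < Λ) (hβ : 0 < β) (hγ : 0 < γ) (hπ : 0 < π)
    (hη : 0 < η) (hθ : 0 < θ) (hδ : 0 < δ) (hα : 0 < α)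
    (S V E I T R : ℝ → ℝ)
    (hS : ∀ t ≥ (0 : ℝ),
      HasDerivAt S (Λ + η * R t + θ * V t - (β * I t + π + μ) * S t) t)
    (hV : ∀ t ≥ (0 : ℝ), HasDerivAt V (π * S t - (θ + μ) * V t) t)
    (hE : ∀ t ≥ (0 : ℝ), HasDerivAt E (β * S t * I t - (γ + μ) * E t) t)
    (hI : ∀ t ≥ (0 : ℝ), HasDerivAt I (γ * E t - (δ + τ + μ) * I t) t)
    (hT : ∀ t ≥ (0 : ℝ), HasDerivAt T (δ * I t - (α + ω + μ) * T t) t)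
    (hR : ∀ t ≥ (0 : ℝ), HasDerivAt R (α * T t - (η + μ) * R t) t)
    (hS0 : 0 < S 0) (hV0 : 0 ≤ V 0) (hE0 : 0 ≤ E 0) (hI0 : 0 ≤ I 0)
    (hT0 : 0 ≤ T 0) (hR0 : 0 ≤ R 0) :
    ∀ t ≥ (0 : ℝ),
      0 ≤ S t ∧ 0 ≤ V t ∧ 0 ≤ E t ∧ 0 ≤ I t ∧ 0 ≤ T t ∧ 0 ≤ R t := by
  intro t ht
  set x : ℝ → Fin 6 → ℝ := fun s => ![S s, V s, E s, I s, T s, R s]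
  have hx (s : ℝ) (hs : s ∈ Icc 0 t) :
      HasDerivAt x (sveitrsField Λ β γ μ π η θ δ τ α ω (x s)) s := by
    refine hasDerivAt_pi.2 fun i => ?_
    fin_cases i
    exacts [hS s hs.1, hV s hs.1, hE s hs.1, hI s hs.1, hT s hs.1, hR s hs.1]
  have h0 : 0 ≤ x 0 := fun i => by
    fin_cases i
    exacts [hS0.le, hV0, hE0, hI0, hT0, hR0]
  have hxt := (sveitrsField_quasiPositive hΛ.le hβ.le hγ.le hπ.le hη.le hθ.le hδ.le hα.le
    ).nonneg_of_hasDerivAt (sveitrsField_contDiff ..).locallyLipschitz hx h0 t ⟨ht, le_rfl⟩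
  exact ⟨hxt 0, hxt 1, hxt 2, hxt 3, hxt 4, hxt 5⟩

/-- Positivity of solutions of the SVEITRS tuberculosis model: a differentiable
solution on `[0, ∞)` with nonnegative initial data (and `S 0 > 0`) stays
nonnegative in every compartment. -/
theorem sveitrs_positivity
    (Λ β γ μ π η θ δ τ α ω : ℝ)
    (hΛ : 0 < Λ) (hβ : 0 < β) (hγ : 0 < γ) (hμ : 0 < μ) (hπ : 0 < π)
    (hη : 0 < η) (hθ : 0 < θ) (hδ : 0 < δ) (hτ : 0 < τ) (hα : 0 < α) (hω : 0 < ω)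
    (S V E I T R : ℝ → ℝ)
    (hS : ∀ t ≥ (0 : ℝ),
      HasDerivAt S (Λ + η * R t + θ * V t - (β * I t + π + μ) * S t) t)
    (hV : ∀ t ≥ (0 : ℝ), HasDerivAt V (π * S t - (θ + μ) * V t) t)
    (hE : ∀ t ≥ (0 : ℝ), HasDerivAt E (β * S t * I t - (γ + μ) * E t) t)
    (hI : ∀ t ≥ (0 : ℝ), HasDerivAt I (γ * E t - (δ + τ + μ) * I t) t)
    (hT : ∀ t ≥ (0 : ℝ), HasDerivAt T (δ * I t - (α + ω + μ) * T t) t)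
    (hR : ∀ t ≥ (0 : ℝ), HasDerivAt R (α * T t - (η + μ) * R t) t)
    (hS0 : 0 < S 0) (hV0 : 0 ≤ V 0) (hE0 : 0 ≤ E 0) (hI0 : 0 ≤ I 0)
    (hT0 : 0 ≤ T 0) (hR0 : 0 ≤ R 0) :
    ∀ t ≥ (0 : ℝ),
      0 ≤ S t ∧ 0 ≤ V t ∧ 0 ≤ E t ∧ 0 ≤ I t ∧ 0 ≤ T t ∧ 0 ≤ R t :=
  sveitrs_positivity_general Λ β γ μ π η θ δ τ α ω hΛ hβ hγ hπ hη hθ hδ hα S V E I T R hS hV hE hI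
    hT hR hS0 hV0 hE0 hI0 hT0 hR0
end

section
/- Let (S, V, E, I, T, R) : [0, ∞) → ℝ⁶ be a differentiable solution of the SVEITRS system whose components I(t) and T(t) are nonnegative for all t ≥ 0, and set N(t) = S(t) + V(t) + E(t) + I(t) + T(t) + R(t). If N(0) ≤ Λ/μ, then N(t) ≤ Λ/μ for all t ≥ 0. -/
open Set

/-- Integrating factor: `(f - c) e^{k t}` is antitone on `[a, ∞)`. -/
theorem le_of_hasDerivAt_le_mul_sub {f f' : ℝ → ℝ} {a c k : ℝ}
    (hf : ∀ t ≥ a, HasDerivAt f (f' t) t) (hf' : ∀ t ≥ a, f' t ≤ k * (c - f t))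
    (ha : f a ≤ c) : ∀ t ≥ a, f t ≤ c := by
  set g : ℝ → ℝ := fun t => (f t - c) * Real.exp (k * t)
  have hg : ∀ t ≥ a, HasDerivAt g ((f' t + k * (f t - c)) * Real.exp (k * t)) t := by
    intro t ht
    have hexp : HasDerivAt (fun t => Real.exp (k * t)) (Real.exp (k * t) * k) t := by
      simpa [mul_comm] using ((hasDerivAt_id t).const_mul k).exp
    exact (((hf t ht).sub_const c).mul hexp).congr_deriv (by ring)
  have hg_anti : AntitoneOn g (Ici a) := by
    refine antitoneOn_of_hasDerivWithinAt_nonpos (convex_Ici a)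
      (fun t ht => (hg t ht).continuousAt.continuousWithinAt)
      (fun t ht => (hg t (interior_subset ht)).hasDerivWithinAt) fun t ht => ?_
    have ht : t ≥ a := interior_subset ht
    exact mul_nonpos_of_nonpos_of_nonneg (by linarith [hf' t ht]) (Real.exp_pos _).le
  intro t ht
  have hga : g a ≤ 0 := mul_nonpos_of_nonpos_of_nonneg (by linarith) (Real.exp_pos _).le
  have hgt : g t ≤ 0 := (hg_anti self_mem_Ici ht ht).trans hga
  linarith [nonpos_of_mul_nonpos_left hgt (Real.exp_pos (k * t))]

theorem sveitrs_total_population_bounded_general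
    (Λ β γ μ π η θ δ τ α ω : ℝ)
    (hμ : 0 < μ) (hτ : 0 < τ) (hω : 0 < ω)
    (S V E I T R : ℝ → ℝ)
    (hS : ∀ t ≥ (0 : ℝ),
      HasDerivAt S (Λ + η * R t + θ * V t - (β * I t + π + μ) * S t) t)
    (hV : ∀ t ≥ (0 : ℝ), HasDerivAt V (π * S t - (θ + μ) * V t) t)
    (hE : ∀ t ≥ (0 : ℝ), HasDerivAt E (β * S t * I t - (γ + μ) * E t) t)
    (hI : ∀ t ≥ (0 : ℝ), HasDerivAt I (γ * E t - (δ + τ + μ) * I t) t)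
    (hT : ∀ t ≥ (0 : ℝ), HasDerivAt T (δ * I t - (α + ω + μ) * T t) t)
    (hR : ∀ t ≥ (0 : ℝ), HasDerivAt R (α * T t - (η + μ) * R t) t)
    (hInonneg : ∀ t ≥ (0 : ℝ), 0 ≤ I t)
    (hTnonneg : ∀ t ≥ (0 : ℝ), 0 ≤ T t)
    (hN0 : S 0 + V 0 + E 0 + I 0 + T 0 + R 0 ≤ Λ / μ) :
    ∀ t ≥ (0 : ℝ), S t + V t + E t + I t + T t + R t ≤ Λ / μ := by
  set N : ℝ → ℝ := fun t => S t + V t + E t + I t + T t + R t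
  have hN : ∀ t ≥ (0 : ℝ), HasDerivAt N (Λ - μ * N t - τ * I t - ω * T t) t := fun t ht =>
    ((((((hS t ht).add (hV t ht)).add (hE t ht)).add (hI t ht)).add (hT t ht)).add
      (hR t ht)).congr_deriv (by ring)
  refine le_of_hasDerivAt_le_mul_sub (k := μ) hN (fun t ht => ?_) hN0
  rw [mul_sub, mul_div_cancel₀ Λ hμ.ne']
  linarith [mul_nonneg hτ.le (hInonneg t ht), mul_nonneg hω.le (hTnonneg t ht)]

/-- Boundedness of the total population of the SVEITRS tuberculosis model: if
`I` and `T` stay nonnegative and the total population starts below `Λ/μ`, it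
stays below `Λ/μ` for all `t ≥ 0`. -/
theorem sveitrs_total_population_bounded
    (Λ β γ μ π η θ δ τ α ω : ℝ)
    (hΛ : 0 < Λ) (hβ : 0 < β) (hγ : 0 < γ) (hμ : 0 < μ) (hπ : 0 < π)
    (hη : 0 < η) (hθ : 0 < θ) (hδ : 0 < δ) (hτ : 0 < τ) (hα : 0 < α) (hω : 0 < ω)
    (S V E I T R : ℝ → ℝ)
    (hS : ∀ t ≥ (0 : ℝ),
      HasDerivAt S (Λ + η * R t + θ * V t - (β * I t + π + μ) * S t) t)
    (hV : ∀ t ≥ (0 : ℝ), HasDerivAt V (π * S t - (θ + μ) * V t) t)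
    (hE : ∀ t ≥ (0 : ℝ), HasDerivAt E (β * S t * I t - (γ + μ) * E t) t)
    (hI : ∀ t ≥ (0 : ℝ), HasDerivAt I (γ * E t - (δ + τ + μ) * I t) t)
    (hT : ∀ t ≥ (0 : ℝ), HasDerivAt T (δ * I t - (α + ω + μ) * T t) t)
    (hR : ∀ t ≥ (0 : ℝ), HasDerivAt R (α * T t - (η + μ) * R t) t)
    (hInonneg : ∀ t ≥ (0 : ℝ), 0 ≤ I t)
    (hTnonneg : ∀ t ≥ (0 : ℝ), 0 ≤ T t)
    (hN0 : S 0 + V 0 + E 0 + I 0 + T 0 + R 0 ≤ Λ / μ) :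
    ∀ t ≥ (0 : ℝ), S t + V t + E t + I t + T t + R t ≤ Λ / μ :=
  sveitrs_total_population_bounded_general Λ β γ μ π η θ δ τ α ω hμ hτ hω S V E I T R hS hV hE hI hT
    hR hInonneg hTnonneg hN0
end

section
/- The region Ω = {(S, V, E, I, T, R) ∈ ℝ⁶ : S ≥ 0, V ≥ 0, E ≥ 0, I ≥ 0, T ≥ 0, R ≥ 0 and S + V + E + I + T + R ≤ Λ/μ} is positively invariant for the SVEITRS system: if a differentiable solution of the system with S(0) > 0 starts in Ω at time 0, then it remains in Ω for all t ≥ 0. -/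
/-!
Ω is the nonnegative orthant in the seven coordinates `S, V, E, I, T, R, Λ/μ - N`, where `N` is
the total population. Where one of them vanishes and the others are nonnegative, its derivative
is nonnegative (for the last one because `N' = Λ - μN - τI - ωT`). To turn this into invariance,
shift every coordinate by `ε e^{C(t - b)}`: for `C` large the shifted coordinates have positive
derivative at the first time one of them reaches zero, so they never do; then let `ε → 0`.
-/

open Set Topology

theorem HasDerivWithinAt.nonpos_of_isLocalMinOn_Iio {g : ℝ → ℝ} {g' b : ℝ}
    (hg : HasDerivWithinAt g g' (Iio b) b) (hmin : IsLocalMinOn g (Iio b) b) : g' ≤ 0 := by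
  refine le_of_tendsto ((hasDerivWithinAt_iff_tendsto_slope' self_notMem_Iio).mp hg) ?_
  filter_upwards [hmin, self_mem_nhdsWithin] with s hs hsb
  rw [slope_def_field]
  exact div_nonpos_of_nonneg_of_nonpos (sub_nonneg.2 hs) (sub_nonpos.2 (le_of_lt hsb))

theorem forall_pos_of_deriv_pos_boundary {ι : Type*} [Finite ι] {u u' : ι → ℝ → ℝ} {b : ℝ}
    (hu : ∀ i, ∀ t ∈ Icc 0 b, HasDerivAt (u i) (u' i t) t) (h0 : ∀ i, 0 < u i 0)
    (hbdry : ∀ t ∈ Ioc 0 b, (∀ j, 0 ≤ u j t) → ∀ i, u i t = 0 → 0 < u' i t) :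
    ∀ t ∈ Icc 0 b, ∀ i, 0 < u i t := by
  by_contra! ⟨t₁, ht₁, i₁, hi₁⟩
  set B := ⋃ i, Icc 0 b ∩ u i ⁻¹' Iic 0
  have hB : IsCompact B := by
    refine (isCompact_Icc (a := 0) (b := b)).of_isClosed_subset
      (isClosed_iUnion_of_finite fun i => ?_) (iUnion_subset fun i => inter_subset_left)
    exact ContinuousOn.preimage_isClosed_of_isClosed
      (fun t ht => (hu i t ht).continuousAt.continuousWithinAt) isClosed_Icc isClosed_Iic
  obtain ⟨t, htB, hleast⟩ := hB.exists_isLeast ⟨t₁, mem_iUnion.2 ⟨i₁, ht₁, hi₁⟩⟩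
  obtain ⟨i, ht, hit⟩ := mem_iUnion.1 htB
  have ht0 : 0 < t := ht.1.lt_of_ne fun h => (h ▸ hit : u i 0 ≤ 0).not_gt (h0 i)
  have hbefore : ∀ᶠ s in 𝓝[<] t, ∀ j, 0 < u j s := by
    filter_upwards [Ioo_mem_nhdsLT ht0] with s hs j
    by_contra! h
    exact hs.2.not_ge (hleast (mem_iUnion.2 ⟨j, ⟨hs.1.le, hs.2.le.trans ht.2⟩, h⟩))
  have hnonneg (j : ι) : 0 ≤ u j t :=
    ge_of_tendsto ((hu j t ht).continuousAt.tendsto.mono_left nhdsWithin_le_nhds)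
      (hbefore.mono fun s hs => (hs j).le)
  have hzero : u i t = 0 := le_antisymm hit (hnonneg i)
  have hmin : IsLocalMinOn (u i) (Iio t) t :=
    hbefore.mono fun s hs => hzero ▸ (hs i).le
  exact ((hu i t ht).hasDerivWithinAt.nonpos_of_isLocalMinOn_Iio hmin).not_gt
    (hbdry t ⟨ht0, ht.2⟩ hnonneg i hzero)

theorem nonneg_of_deriv_add_mul_pos_boundary {ι : Type*} [Finite ι] {x x' : ι → ℝ → ℝ} {b C : ℝ}
    (hb : 0 ≤ b) (hC : 0 ≤ C) (hx : ∀ i, ∀ t ∈ Icc 0 b, HasDerivAt (x i) (x' i t) t)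
    (h0 : ∀ i, 0 ≤ x i 0)
    (hbdry : ∀ t ∈ Ioc 0 b, ∀ ε ∈ Ioc (0 : ℝ) 1,
      (∀ j, -ε ≤ x j t) → ∀ i, x i t = -ε → 0 < x' i t + C * ε) :
    ∀ i, 0 ≤ x i b := by
  intro i
  refine le_of_forall_pos_lt_add fun a ha => ?_
  let e (t : ℝ) : ℝ := min a 1 * Real.exp (C * (t - b))
  have he (t : ℝ) : HasDerivAt e (C * e t) t := by
    refine ((((hasDerivAt_id t).sub_const b).const_mul C).exp.const_mul (min a 1)).congr_deriv
      ?_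
    simp only [e, id]; ring
  have he_mem (t : ℝ) (ht : t ∈ Icc 0 b) : e t ∈ Ioc 0 1 := by
    refine ⟨by positivity, (mul_le_of_le_one_right (by positivity) ?_).trans (min_le_right a 1)⟩
    exact Real.exp_le_one_iff.2 (mul_nonpos_of_nonneg_of_nonpos hC (by linarith [ht.2]))
  have hu := forall_pos_of_deriv_pos_boundary (u := fun j t => x j t + e t)
    (u' := fun j t => x' j t + C * e t) (fun j t ht => (hx j t ht).add (he t))
    (fun j => add_pos_of_nonneg_of_pos (h0 j) (he_mem 0 ⟨le_rfl, hb⟩).1)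
    (fun t ht hnn j hj => by
      have := hbdry t ht (e t) (he_mem t (Ioc_subset_Icc_self ht))
        (fun k => by linarith [hnn k]) j (by linarith)
      linarith) b ⟨hb, le_rfl⟩ i
  simp only [e, sub_self, mul_zero, Real.exp_zero, mul_one] at hu
  linarith [min_le_left a 1]

namespace SVEITRS

variable (Λ β γ μ π η θ δ τ α ω : ℝ)

/-- Ω is the set where all seven entries are nonnegative. -/
noncomputable def slackCoords (s v e i t r : ℝ) : Fin 7 → ℝ :=
  ![s, v, e, i, t, r, Λ / μ - (s + v + e + i + t + r)]

/-- The last entry is the derivative of `Λ/μ - N`. -/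
def field (s v e i t r : ℝ) : Fin 7 → ℝ :=
  ![Λ + η * r + θ * v - (β * i + π + μ) * s, π * s - (θ + μ) * v, β * s * i - (γ + μ) * e,
    γ * e - (δ + τ + μ) * i, δ * i - (α + ω + μ) * t, α * t - (η + μ) * r,
    μ * (s + v + e + i + t + r) - Λ + τ * i + ω * t]

/-- Dominates every rate at which the other coordinates, each at least `-ε`, can push a coordinate
at `-ε` further down; for `βSI` this uses `S + I ≤ Λ/μ + 5ε`. -/
noncomputable def perturbationRate : ℝ := β * (Λ / μ + 6) + η + θ + π + γ + δ + α + τ + ω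

variable {Λ β γ μ π η θ δ τ α ω}

theorem hasDerivAt_slackCoords {S V E I T R : ℝ → ℝ} {t : ℝ}
    (hS : HasDerivAt S (Λ + η * R t + θ * V t - (β * I t + π + μ) * S t) t)
    (hV : HasDerivAt V (π * S t - (θ + μ) * V t) t)
    (hE : HasDerivAt E (β * S t * I t - (γ + μ) * E t) t)
    (hI : HasDerivAt I (γ * E t - (δ + τ + μ) * I t) t)
    (hT : HasDerivAt T (δ * I t - (α + ω + μ) * T t) t)
    (hR : HasDerivAt R (α * T t - (η + μ) * R t) t) (j : Fin 7) :
    HasDerivAt (fun t => slackCoords Λ μ (S t) (V t) (E t) (I t) (T t) (R t) j)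
      (field Λ β γ μ π η θ δ τ α ω (S t) (V t) (E t) (I t) (T t) (R t) j) t := by
  fin_cases j
  · exact hS
  · exact hV
  · exact hE
  · exact hI
  · exact hT
  · exact hR
  · refine ((hS.add hV |>.add hE |>.add hI |>.add hT |>.add hR).const_sub (Λ / μ)).congr_deriv ?_
    simp only [field, Fin.reduceFinMk, Matrix.cons_val]
    ring

theorem field_add_perturbationRate_mul_pos (hΛ : 0 ≤ Λ) (hβ : 0 ≤ β) (hγ : 0 ≤ γ) (hμ : 0 < μ)
    (hπ : 0 ≤ π) (hη : 0 ≤ η) (hθ : 0 ≤ θ) (hδ : 0 ≤ δ) (hτ : 0 ≤ τ) (hα : 0 ≤ α) (hω : 0 ≤ ω)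
    {s v e i t r ε : ℝ} (hε : ε ∈ Ioc 0 1) (hx : ∀ j, -ε ≤ slackCoords Λ μ s v e i t r j)
    (j : Fin 7) (hj : slackCoords Λ μ s v e i t r j = -ε) :
    0 < field Λ β γ μ π η θ δ τ α ω s v e i t r j +
      perturbationRate Λ β γ μ π η θ δ τ α ω * ε := by
  obtain ⟨hε0, hε1⟩ := hε
  simp only [slackCoords, Fin.forall_fin_succ, Fin.isValue, Matrix.cons_val_zero,
    Matrix.cons_val_succ, Matrix.cons_val_fin_one, neg_le_sub_iff_le_add, forall_const] at hx
  obtain ⟨hs, hv, he, hi, ht, hr, hN⟩ := hx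
  have hΛμ : 0 ≤ Λ / μ := div_nonneg hΛ hμ.le
  have hβΛμ : 0 ≤ β * (Λ / μ) * ε := by positivity
  have hμε : 0 < μ * ε := mul_pos hμ hε0
  fin_cases j <;>
    simp only [slackCoords, field, perturbationRate, Fin.reduceFinMk, Matrix.cons_val] at hj ⊢
  · subst hj
    linarith [mul_nonneg hη (neg_le_iff_add_nonneg.1 hr),
      mul_nonneg hθ (neg_le_iff_add_nonneg.1 hv),
      mul_nonneg (mul_nonneg hβ hε0.le) (neg_le_iff_add_nonneg.1 hi),
      mul_nonneg (mul_nonneg hβ hε0.le) (sub_nonneg.2 hε1),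
      mul_nonneg (by positivity : 0 ≤ 5 * β + 2 * π + γ + δ + α + τ + ω) hε0.le]
  · nlinarith [mul_nonneg hπ (neg_le_iff_add_nonneg.1 hs)]
  · nlinarith [mul_nonneg hβ
        (mul_nonneg (neg_le_iff_add_nonneg.1 hs) (neg_le_iff_add_nonneg.1 hi)),
      mul_nonneg (mul_nonneg hβ hε0.le) (by linarith : 0 ≤ Λ / μ + 6 - s - i - ε)]
  · nlinarith [mul_nonneg hγ (neg_le_iff_add_nonneg.1 he)]
  · nlinarith [mul_nonneg hδ (neg_le_iff_add_nonneg.1 hi)]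
  · nlinarith [mul_nonneg hα (neg_le_iff_add_nonneg.1 ht)]
  · have hμΛ : μ * (Λ / μ) = Λ := mul_div_cancel₀ Λ hμ.ne'
    nlinarith [mul_nonneg hτ (neg_le_iff_add_nonneg.1 hi),
      mul_nonneg hω (neg_le_iff_add_nonneg.1 ht)]

theorem slackCoords_nonneg {s v e i t r : ℝ} (hs : 0 ≤ s) (hv : 0 ≤ v) (he : 0 ≤ e) (hi : 0 ≤ i)
    (ht : 0 ≤ t) (hr : 0 ≤ r) (hN : s + v + e + i + t + r ≤ Λ / μ) (j : Fin 7) :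
    0 ≤ slackCoords Λ μ s v e i t r j := by
  fin_cases j <;> simp only [slackCoords, Fin.reduceFinMk, Matrix.cons_val] <;> linarith

end SVEITRS

open SVEITRS

/-- The region `Ω = {(S,V,E,I,T,R) : all coordinates nonnegative and
`S+V+E+I+T+R ≤ Λ/μ`}` is positively invariant for the SVEITRS tuberculosis
model (for solutions with `S 0 > 0`). -/
theorem sveitrs_invariant_region
    (Λ β γ μ π η θ δ τ α ω : ℝ)
    (hΛ : 0 < Λ) (hβ : 0 < β) (hγ : 0 < γ) (hμ : 0 < μ) (hπ : 0 < π)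
    (hη : 0 < η) (hθ : 0 < θ) (hδ : 0 < δ) (hτ : 0 < τ) (hα : 0 < α) (hω : 0 < ω)
    (S V E I T R : ℝ → ℝ)
    (hS : ∀ t ≥ (0 : ℝ),
      HasDerivAt S (Λ + η * R t + θ * V t - (β * I t + π + μ) * S t) t)
    (hV : ∀ t ≥ (0 : ℝ), HasDerivAt V (π * S t - (θ + μ) * V t) t)
    (hE : ∀ t ≥ (0 : ℝ), HasDerivAt E (β * S t * I t - (γ + μ) * E t) t)
    (hI : ∀ t ≥ (0 : ℝ), HasDerivAt I (γ * E t - (δ + τ + μ) * I t) t)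
    (hT : ∀ t ≥ (0 : ℝ), HasDerivAt T (δ * I t - (α + ω + μ) * T t) t)
    (hR : ∀ t ≥ (0 : ℝ), HasDerivAt R (α * T t - (η + μ) * R t) t)
    (hS0 : 0 < S 0) (hV0 : 0 ≤ V 0) (hE0 : 0 ≤ E 0) (hI0 : 0 ≤ I 0)
    (hT0 : 0 ≤ T 0) (hR0 : 0 ≤ R 0)
    (hN0 : S 0 + V 0 + E 0 + I 0 + T 0 + R 0 ≤ Λ / μ) :
    ∀ t ≥ (0 : ℝ),
      0 ≤ S t ∧ 0 ≤ V t ∧ 0 ≤ E t ∧ 0 ≤ I t ∧ 0 ≤ T t ∧ 0 ≤ R t ∧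
      S t + V t + E t + I t + T t + R t ≤ Λ / μ := by
  intro b hb
  have hC : 0 ≤ perturbationRate Λ β γ μ π η θ δ τ α ω := by
    unfold perturbationRate; positivity
  have hx := nonneg_of_deriv_add_mul_pos_boundary
    (x := fun j t => slackCoords Λ μ (S t) (V t) (E t) (I t) (T t) (R t) j)
    (x' := fun j t => field Λ β γ μ π η θ δ τ α ω (S t) (V t) (E t) (I t) (T t) (R t) j) hb hC
    (fun j t ht => hasDerivAt_slackCoords (hS t ht.1) (hV t ht.1) (hE t ht.1) (hI t ht.1)
      (hT t ht.1) (hR t ht.1) j)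
    (slackCoords_nonneg hS0.le hV0 hE0 hI0 hT0 hR0 hN0)
    (fun _ _ _ hε hx j hj => field_add_perturbationRate_mul_pos hΛ.le hβ.le hγ.le hμ hπ.le hη.le
      hθ.le hδ.le hτ.le hα.le hω.le hε hx j hj)
  simpa only [slackCoords, Fin.forall_fin_succ, Fin.isValue, Matrix.cons_val_zero,
    Matrix.cons_val_succ, Matrix.cons_val_fin_one, sub_nonneg, forall_const] using hx
end

section
/- Let F be the 3×3 real matrix with F₁₂ = Λβ(θ+μ)/(μ(θ+π+μ)) and all other entries 0, and let W be the 3×3 real matrix with rows (γ+μ, 0, 0), (−γ, δ+τ+μ, 0), (0, −δ, α+ω+μ). Then W is invertible and the characteristic polynomial of F·W⁻¹ is X²·(X − R_v); in particular the eigenvalues of F·W⁻¹ are R_v, 0, 0, so the spectral radius of F·W⁻¹ equals R_v. -/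
/-!
`F` has rank one, `F = c · e₀ e₁ᵀ`, so `F W⁻¹ = c · e₀ (row₁ W⁻¹)` has rank one as well and its
characteristic polynomial is `X³ - t X²` with `t` its trace `c · (W⁻¹)₁₀`. Since `W` is lower
triangular with positive diagonal it is invertible, and `(W⁻¹)₁₀ = γ / ((γ + μ)(δ + τ + μ))`,
whence `t = R_v`.
-/

open Polynomial Matrix

namespace Matrix

section RankOne

variable {n R : Type*} [Fintype n] [DecidableEq n] [CommRing R]

theorem single_mul_eq_vecMulVec (i j : n) (c : R) (M : Matrix n n R) :
    single i j c * M = vecMulVec (Pi.single i c) (M j) := by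
  ext k l
  rcases eq_or_ne k i with rfl | hk
  · simp [vecMulVec_apply]
  · simp [vecMulVec_apply, hk]

theorem charpoly_single_mul (i j : n) (c : R) (M : Matrix n n R) :
    (single i j c * M).charpoly =
      X ^ Fintype.card n - C (c * M j i) * X ^ (Fintype.card n - 1) := by
  rw [single_mul_eq_vecMulVec, charpoly_vecMulVec, single_dotProduct, smul_eq_C_mul]

end RankOne

section LowerTriangular

variable {K : Type*} [Field K] {a c f : K}

theorem isUnit_lowerTriangular_fin_three (ha : a ≠ 0) (hc : c ≠ 0) (hf : f ≠ 0) (b d e : K) :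
    IsUnit !![a, 0, 0; b, c, 0; d, e, f] := by
  rw [isUnit_iff_isUnit_det, det_fin_three, isUnit_iff_ne_zero]
  simp [ha, hc, hf]

theorem inv_lowerTriangular_fin_three (ha : a ≠ 0) (hc : c ≠ 0) (hf : f ≠ 0) (b d e : K) :
    !![a, 0, 0; b, c, 0; d, e, f]⁻¹ =
      !![a⁻¹, 0, 0; -b / (a * c), c⁻¹, 0; (b * e - c * d) / (a * c * f), -e / (c * f), f⁻¹] := by
  refine inv_eq_right_inv ?_
  ext i j
  fin_cases i <;> fin_cases j <;> simp [mul_apply, Fin.sum_univ_three] <;> field_simp <;> ring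

end LowerTriangular

end Matrix

theorem Polynomial.isRoot_X_pow_mul_X_sub_C {R : Type*} [CommRing R] [IsDomain R] {k : ℕ}
    (hk : k ≠ 0) (r x : R) : (X ^ k * (X - C r)).IsRoot x ↔ x = r ∨ x = 0 := by
  simp [hk, sub_eq_zero, or_comm]

theorem sveitrs_next_generation_matrix_general
    (Λ β γ μ π θ δ τ α ω : ℝ)
    (hγ : 0 < γ) (hμ : 0 < μ)
    (hδ : 0 < δ) (hτ : 0 < τ) (hα : 0 < α) (hω : 0 < ω)
    (Rv : ℝ)
    (hRv : Rv = Λ * β * γ * (θ + μ) /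
      (μ * (θ + π + μ) * (δ + τ + μ) * (γ + μ)))
    (F W : Matrix (Fin 3) (Fin 3) ℝ)
    (hF : F = !![0, Λ * β * (θ + μ) / (μ * (θ + π + μ)), 0;
                 0, 0, 0;
                 0, 0, 0])
    (hW : W = !![γ + μ, 0, 0;
                 -γ, δ + τ + μ, 0;
                 0, -δ, α + ω + μ]) :
    IsUnit W ∧
    (F * W⁻¹).charpoly = X ^ 2 * (X - C Rv) ∧
    (∀ x : ℝ, (F * W⁻¹).charpoly.IsRoot x ↔ x = Rv ∨ x = 0) := by
  have hE : γ + μ ≠ 0 := by positivity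
  have hI : δ + τ + μ ≠ 0 := by positivity
  have hT : α + ω + μ ≠ 0 := by positivity
  set c := Λ * β * (θ + μ) / (μ * (θ + π + μ))
  have hF_single : F = single 0 1 c := by
    rw [hF]; ext i j; fin_cases i <;> fin_cases j <;> rfl
  have hR : c * W⁻¹ 1 0 = Rv := by
    rw [hW, inv_lowerTriangular_fin_three hE hI hT, hRv]
    simp only [c, of_apply, cons_val', cons_val_zero, cons_val_one, empty_val', cons_val_fin_one]
    rw [neg_neg, div_mul_div_comm]
    ring
  have hcharpoly : (F * W⁻¹).charpoly = X ^ 2 * (X - C Rv) := by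
    rw [hF_single, charpoly_single_mul, hR, Fintype.card_fin]
    ring
  exact ⟨hW ▸ isUnit_lowerTriangular_fin_three hE hI hT _ _ _, hcharpoly,
    fun x => hcharpoly ▸ isRoot_X_pow_mul_X_sub_C two_ne_zero Rv x⟩

/-- Next-generation matrix computation for the SVEITRS tuberculosis model: the
transition matrix `W` is invertible, the characteristic polynomial of `F·W⁻¹`
is `X²·(X − R_v)`, and hence the eigenvalues of `F·W⁻¹` are exactly `R_v` and
`0` (so the spectral radius of `F·W⁻¹` equals `R_v`). -/
theorem sveitrs_next_generation_matrix
    (Λ β γ μ π η θ δ τ α ω : ℝ)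
    (hΛ : 0 < Λ) (hβ : 0 < β) (hγ : 0 < γ) (hμ : 0 < μ) (hπ : 0 < π)
    (hη : 0 < η) (hθ : 0 < θ) (hδ : 0 < δ) (hτ : 0 < τ) (hα : 0 < α) (hω : 0 < ω)
    (Rv : ℝ)
    (hRv : Rv = Λ * β * γ * (θ + μ) /
      (μ * (θ + π + μ) * (δ + τ + μ) * (γ + μ)))
    (F W : Matrix (Fin 3) (Fin 3) ℝ)
    (hF : F = !![0, Λ * β * (θ + μ) / (μ * (θ + π + μ)), 0;
                 0, 0, 0;
                 0, 0, 0])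
    (hW : W = !![γ + μ, 0, 0;
                 -γ, δ + τ + μ, 0;
                 0, -δ, α + ω + μ]) :
    IsUnit W ∧
    (F * W⁻¹).charpoly = X ^ 2 * (X - C Rv) ∧
    (∀ x : ℝ, (F * W⁻¹).charpoly.IsRoot x ↔ x = Rv ∨ x = 0) :=
  sveitrs_next_generation_matrix_general Λ β γ μ π θ δ τ α ω hγ hμ hδ hτ hα hω Rv hRv F W hF hW
end

section
/- Let J be the 6×6 real Jacobian matrix of the SVEITRS system at the disease-free equilibrium, with rows (−(π+μ), θ, 0, −βS₀, 0, η), (π, −(θ+μ), 0, 0, 0, 0), (0, 0, −(γ+μ), βS₀, 0, 0), (0, 0, γ, −(δ+τ+μ), 0, 0), (0, 0, 0, δ, −(α+ω+μ), 0), (0, 0, 0, 0, α, −(η+μ)), where S₀ = Λ(θ+μ)/(μ(θ+π+μ)). If R_v < 1, then every complex eigenvalue of J has strictly negative real part (so the disease-free equilibrium is locally asymptotically stable). -/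
/-!
Listing the coordinates in the order (E, I, S, V, T, R) makes the Jacobian block lower
triangular with three 2 × 2 diagonal blocks, so its characteristic polynomial is the product
of theirs. A real 2 × 2 matrix with negative trace and positive determinant has both
eigenvalues in the open left half-plane; all three blocks have negative trace, and the
determinant of the infection block (E, I) is (1 - R_v)(γ + μ)(δ + τ + μ).
-/

open Matrix Polynomial

namespace Polynomial

def IsHurwitzStable (p : ℝ[X]) : Prop :=
  ∀ z : ℂ, (p.map (algebraMap ℝ ℂ)).IsRoot z → z.re < 0

theorem IsHurwitzStable.mul {p q : ℝ[X]} (hp : p.IsHurwitzStable) (hq : q.IsHurwitzStable) :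
    (p * q).IsHurwitzStable := by
  intro z hz
  rw [Polynomial.map_mul, root_mul] at hz
  exact hz.elim (hp z) (hq z)

end Polynomial

theorem Complex.re_neg_of_sq_sub_mul_add_eq_zero {t d : ℝ} (ht : t < 0) (hd : 0 < d) {z : ℂ}
    (hz : z ^ 2 - t * z + d = 0) : z.re < 0 := by
  have hre : z.re ^ 2 - z.im ^ 2 - t * z.re + d = 0 := by
    simpa [pow_two] using congrArg Complex.re hz
  have him : z.im * (2 * z.re - t) = 0 := by
    have := congrArg Complex.im hz
    simp only [pow_two, add_im, sub_im, mul_im, ofReal_re, ofReal_im, zero_mul, add_zero,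
      zero_im] at this
    linarith
  -- either `z` is real, and `z ^ 2 - t * z + d > 0` for `z ≥ 0`, or `z.re = t / 2`
  rcases mul_eq_zero.mp him with hreal | hcenter
  · by_contra! hnonneg
    nlinarith
  · linarith

theorem Matrix.isHurwitzStable_charpoly_fin_two {M : Matrix (Fin 2) (Fin 2) ℝ}
    (htr : M.trace < 0) (hdet : 0 < M.det) : M.charpoly.IsHurwitzStable := by
  intro z hz
  rw [charpoly_fin_two] at hz
  refine Complex.re_neg_of_sq_sub_mul_add_eq_zero htr hdet ?_
  simpa using hz

theorem Matrix.charpoly_sveitrs_pattern {R : Type*} [CommRing R]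
    (a b c d e f g h i j k l m n : R) :
    (!![a, b, 0, c, 0, d;
        e, f, 0, 0, 0, 0;
        0, 0, g, h, 0, 0;
        0, 0, i, j, 0, 0;
        0, 0, 0, k, l, 0;
        0, 0, 0, 0, m, n] : Matrix (Fin 6) (Fin 6) R).charpoly =
      !![g, h; i, j].charpoly * (!![a, b; e, f].charpoly * !![l, 0; m, n].charpoly) := by
  let σ : Equiv.Perm (Fin 6) := (Equiv.swap 0 2).trans (Equiv.swap 1 3)
  let ρ : Fin 2 ⊕ Fin 4 ≃ Fin 6 := finSumFinEquiv.trans σ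
  rw [← charpoly_reindex ρ.symm]
  have hblocks : reindex ρ.symm ρ.symm (!![a, b, 0, c, 0, d;
        e, f, 0, 0, 0, 0;
        0, 0, g, h, 0, 0;
        0, 0, i, j, 0, 0;
        0, 0, 0, k, l, 0;
        0, 0, 0, 0, m, n] : Matrix (Fin 6) (Fin 6) R) =
      fromBlocks !![g, h; i, j] 0 !![0, c; 0, 0; 0, k; 0, 0]
        !![a, b, 0, d; e, f, 0, 0; 0, 0, l, 0; 0, 0, m, n] := by
    ext (i | i) (j | j) <;> fin_cases i <;> fin_cases j <;> rfl
  have hlower : (!![a, b, 0, d; e, f, 0, 0; 0, 0, l, 0; 0, 0, m, n] : Matrix (Fin 4) (Fin 4) R) =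
      reindex finSumFinEquiv finSumFinEquiv
        (fromBlocks !![a, b; e, f] !![0, d; 0, 0] 0 !![l, 0; m, n]) := by
    ext i j
    fin_cases i <;> fin_cases j <;> rfl
  rw [hblocks, charpoly_fromBlocks_zero₁₂, hlower, charpoly_reindex, charpoly_fromBlocks_zero₂₁]

theorem sveitrs_dfe_locally_asymptotically_stable_general
    (Λ β γ μ π η θ δ τ α ω : ℝ)
    (hγ : 0 < γ) (hμ : 0 < μ) (hπ : 0 < π)
    (hη : 0 < η) (hθ : 0 < θ) (hδ : 0 < δ) (hτ : 0 < τ) (hα : 0 < α) (hω : 0 < ω)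
    (S₀ : ℝ) (hS₀ : S₀ = Λ * (θ + μ) / (μ * (θ + π + μ)))
    (Rv : ℝ)
    (hRv : Rv = Λ * β * γ * (θ + μ) /
      (μ * (θ + π + μ) * (δ + τ + μ) * (γ + μ)))
    (J : Matrix (Fin 6) (Fin 6) ℝ)
    (hJ : J = !![-(π + μ), θ, 0, -(β * S₀), 0, η;
                 π, -(θ + μ), 0, 0, 0, 0;
                 0, 0, -(γ + μ), β * S₀, 0, 0;
                 0, 0, γ, -(δ + τ + μ), 0, 0;
                 0, 0, 0, δ, -(α + ω + μ), 0;
                 0, 0, 0, 0, α, -(η + μ)])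
    (hRv1 : Rv < 1) :
    ∀ z : ℂ, (J.charpoly.map (algebraMap ℝ ℂ)).IsRoot z → z.re < 0 := by
  rw [hJ, charpoly_sveitrs_pattern]
  have hdet_infection : 0 < !![-(γ + μ), β * S₀; γ, -(δ + τ + μ)].det := by
    have hdet : !![-(γ + μ), β * S₀; γ, -(δ + τ + μ)].det
        = (1 - Rv) * ((γ + μ) * (δ + τ + μ)) := by
      rw [det_fin_two_of, hRv, hS₀]
      field_simp
    rw [hdet]
    exact mul_pos (sub_pos.mpr hRv1) (by positivity)
  refine (isHurwitzStable_charpoly_fin_two ?_ hdet_infection).mul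
    ((isHurwitzStable_charpoly_fin_two ?_ ?_).mul (isHurwitzStable_charpoly_fin_two ?_ ?_)) <;>
    simp only [trace_fin_two_of, det_fin_two_of] <;> nlinarith

/-- Local asymptotic stability of the disease-free equilibrium of the SVEITRS
tuberculosis model: if `R_v < 1`, every complex eigenvalue of the Jacobian `J`
at the disease-free equilibrium (i.e. every complex root of its characteristic
polynomial) has strictly negative real part. -/
theorem sveitrs_dfe_locally_asymptotically_stable
    (Λ β γ μ π η θ δ τ α ω : ℝ)
    (hΛ : 0 < Λ) (hβ : 0 < β) (hγ : 0 < γ) (hμ : 0 < μ) (hπ : 0 < π)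
    (hη : 0 < η) (hθ : 0 < θ) (hδ : 0 < δ) (hτ : 0 < τ) (hα : 0 < α) (hω : 0 < ω)
    (S₀ : ℝ) (hS₀ : S₀ = Λ * (θ + μ) / (μ * (θ + π + μ)))
    (Rv : ℝ)
    (hRv : Rv = Λ * β * γ * (θ + μ) /
      (μ * (θ + π + μ) * (δ + τ + μ) * (γ + μ)))
    (J : Matrix (Fin 6) (Fin 6) ℝ)
    (hJ : J = !![-(π + μ), θ, 0, -(β * S₀), 0, η;
                 π, -(θ + μ), 0, 0, 0, 0;
                 0, 0, -(γ + μ), β * S₀, 0, 0;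
                 0, 0, γ, -(δ + τ + μ), 0, 0;
                 0, 0, 0, δ, -(α + ω + μ), 0;
                 0, 0, 0, 0, α, -(η + μ)])
    (hRv1 : Rv < 1) :
    ∀ z : ℂ, (J.charpoly.map (algebraMap ℝ ℂ)).IsRoot z → z.re < 0 :=
  sveitrs_dfe_locally_asymptotically_stable_general Λ β γ μ π η θ δ τ α ω hγ hμ hπ hη hθ hδ hτ hα hω
    S₀ hS₀ Rv hRv J hJ hRv1
end

section
/- Let J be the 6×6 real Jacobian matrix of the SVEITRS system at the disease-free equilibrium, with rows (−(π+μ), θ, 0, −βS₀, 0, η), (π, −(θ+μ), 0, 0, 0, 0), (0, 0, −(γ+μ), βS₀, 0, 0), (0, 0, γ, −(δ+τ+μ), 0, 0), (0, 0, 0, δ, −(α+ω+μ), 0), (0, 0, 0, 0, α, −(η+μ)), where S₀ = Λ(θ+μ)/(μ(θ+π+μ)). If R_v > 1, then J has a real eigenvalue that is strictly positive (so the disease-free equilibrium is unstable). -/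
/-!
The rows of the Jacobian belonging to the exposed and infectious compartments `(E, I)` vanish
outside the `(E, I)` columns, so a left eigenvector of the `2 × 2` block
`[[-(γ+μ), βS₀], [γ, -(δ+τ+μ)]]`, extended by zeros, is a left eigenvector of `J`.
That block has the characteristic polynomial `(x + γ + μ)(x + δ + τ + μ) - γβS₀`, which is
negative at `0` exactly when `R_v = γβS₀ / ((γ + μ)(δ + τ + μ)) > 1`, hence has a positive root.
-/

open Matrix Polynomial

theorem Matrix.isRoot_charpoly_of_vecMul_eq_smul {n A : Type*} [Fintype n] [DecidableEq n]
    [CommRing A] [IsDomain A] {M : Matrix n n A} {v : n → A} {t : A} (hv : v ≠ 0)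
    (h : v ᵥ* M = t • v) : M.charpoly.IsRoot t := by
  rw [IsRoot.def, eval_charpoly, ← exists_vecMul_eq_zero_iff]
  refine ⟨v, hv, ?_⟩
  ext i
  simp [vecMul_sub, h]

theorem exists_pos_add_mul_add_eq {a d k : ℝ} (h : a * d < k) :
    ∃ x : ℝ, 0 < x ∧ (x + a) * (x + d) = k := by
  have hD : (a + d) ^ 2 < (a - d) ^ 2 + 4 * k := by nlinarith
  set s := √((a - d) ^ 2 + 4 * k)
  have hs : s ^ 2 = (a - d) ^ 2 + 4 * k := Real.sq_sqrt (by nlinarith)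
  refine ⟨(s - (a + d)) / 2, ?_, ?_⟩
  · have : a + d < s := Real.lt_sqrt_of_sq_lt hD
    linarith
  · linear_combination hs / 4

def dfeJacobian (π μ θ β S₀ η γ δ τ α ω : ℝ) : Matrix (Fin 6) (Fin 6) ℝ :=
  !![-(π + μ), θ, 0, -(β * S₀), 0, η;
     π, -(θ + μ), 0, 0, 0, 0;
     0, 0, -(γ + μ), β * S₀, 0, 0;
     0, 0, γ, -(δ + τ + μ), 0, 0;
     0, 0, 0, δ, -(α + ω + μ), 0;
     0, 0, 0, 0, α, -(η + μ)]

theorem vecMul_dfeJacobian {π μ θ β S₀ η γ δ τ α ω x : ℝ}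
    (hx : (x + (γ + μ)) * (x + (δ + τ + μ)) = γ * (β * S₀)) :
    ![0, 0, γ, x + (γ + μ), 0, 0] ᵥ* dfeJacobian π μ θ β S₀ η γ δ τ α ω
      = x • ![0, 0, γ, x + (γ + μ), 0, 0] := by
  ext i
  fin_cases i <;> simp [dfeJacobian, vecMul, dotProduct, Fin.sum_univ_succ]
  · ring
  · linear_combination -hx

theorem sveitrs_Rv_eq_div (Λ β γ μ π θ δ τ S₀ : ℝ) (hS₀ : S₀ = Λ * (θ + μ) / (μ * (θ + π + μ))) :
    Λ * β * γ * (θ + μ) / (μ * (θ + π + μ) * (δ + τ + μ) * (γ + μ))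
      = γ * (β * S₀) / ((γ + μ) * (δ + τ + μ)) := by
  subst hS₀
  simp only [div_eq_mul_inv, mul_inv]
  ring

theorem sveitrs_dfe_unstable_general
    (Λ β γ μ π η θ δ τ α ω : ℝ)
    (hγ : 0 < γ) (hμ : 0 < μ)
    (hδ : 0 < δ) (hτ : 0 < τ)
    (S₀ : ℝ) (hS₀ : S₀ = Λ * (θ + μ) / (μ * (θ + π + μ)))
    (Rv : ℝ)
    (hRv : Rv = Λ * β * γ * (θ + μ) /
      (μ * (θ + π + μ) * (δ + τ + μ) * (γ + μ)))
    (J : Matrix (Fin 6) (Fin 6) ℝ)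
    (hJ : J = !![-(π + μ), θ, 0, -(β * S₀), 0, η;
                 π, -(θ + μ), 0, 0, 0, 0;
                 0, 0, -(γ + μ), β * S₀, 0, 0;
                 0, 0, γ, -(δ + τ + μ), 0, 0;
                 0, 0, 0, δ, -(α + ω + μ), 0;
                 0, 0, 0, 0, α, -(η + μ)])
    (hRv1 : 1 < Rv) :
    ∃ x : ℝ, 0 < x ∧ J.charpoly.IsRoot x := by
  have hgrowth : (γ + μ) * (δ + τ + μ) < γ * (β * S₀) := by
    rwa [hRv, sveitrs_Rv_eq_div Λ β γ μ π θ δ τ S₀ hS₀, one_lt_div (by positivity)] at hRv1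
  obtain ⟨x, hx, hquad⟩ := exists_pos_add_mul_add_eq hgrowth
  have hw : ![0, 0, γ, x + (γ + μ), 0, 0] ≠ 0 := fun h => hγ.ne' (congrFun h 2)
  rw [hJ]
  exact ⟨x, hx, isRoot_charpoly_of_vecMul_eq_smul hw (vecMul_dfeJacobian hquad)⟩

/-- Instability of the disease-free equilibrium of the SVEITRS tuberculosis
model: if `R_v > 1`, the Jacobian `J` at the disease-free equilibrium has a
strictly positive real eigenvalue (a strictly positive real root of its
characteristic polynomial). -/
theorem sveitrs_dfe_unstable
    (Λ β γ μ π η θ δ τ α ω : ℝ)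
    (hΛ : 0 < Λ) (hβ : 0 < β) (hγ : 0 < γ) (hμ : 0 < μ) (hπ : 0 < π)
    (hη : 0 < η) (hθ : 0 < θ) (hδ : 0 < δ) (hτ : 0 < τ) (hα : 0 < α) (hω : 0 < ω)
    (S₀ : ℝ) (hS₀ : S₀ = Λ * (θ + μ) / (μ * (θ + π + μ)))
    (Rv : ℝ)
    (hRv : Rv = Λ * β * γ * (θ + μ) /
      (μ * (θ + π + μ) * (δ + τ + μ) * (γ + μ)))
    (J : Matrix (Fin 6) (Fin 6) ℝ)
    (hJ : J = !![-(π + μ), θ, 0, -(β * S₀), 0, η;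
                 π, -(θ + μ), 0, 0, 0, 0;
                 0, 0, -(γ + μ), β * S₀, 0, 0;
                 0, 0, γ, -(δ + τ + μ), 0, 0;
                 0, 0, 0, δ, -(α + ω + μ), 0;
                 0, 0, 0, 0, α, -(η + μ)])
    (hRv1 : 1 < Rv) :
    ∃ x : ℝ, 0 < x ∧ J.charpoly.IsRoot x :=
  sveitrs_dfe_unstable_general Λ β γ μ π η θ δ τ α ω hγ hμ hδ hτ S₀ hS₀ Rv hRv J hJ hRv1
end

section
/- Let (S, V) : [0, ∞) → ℝ² be a differentiable solution of the disease-free subsystem S' = Λ + θV − (π + μ)S, V' = πS − (θ + μ)V. Then S(t) → Λ(θ+μ)/(μ(θ+π+μ)) and V(t) → Λπ/(μ(θ+π+μ)) as t → ∞. -/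
/-!
Both `S + V` and `π S − θ V` satisfy scalar relaxation equations `x' = a − k x` with `k > 0`
(rates `μ` and `θ + π + μ`), so each converges to its equilibrium `a / k`; since `π + θ ≠ 0`,
`S` and `V` are recovered from them by an invertible linear change of variables.
-/

open Filter Topology

section LinearRelaxation

variable {f : ℝ → ℝ} {a k t₀ : ℝ}

theorem mul_exp_eq_of_hasDerivAt_neg_mul (hf : ∀ t ≥ t₀, HasDerivAt f (-k * f t) t)
    {t : ℝ} (ht : t₀ ≤ t) :
    f t * Real.exp (k * t) = f t₀ * Real.exp (k * t₀) := by
  have hderiv : ∀ s ≥ t₀, HasDerivAt (fun s => f s * Real.exp (k * s)) 0 s := fun s hs => by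
    have hexp : HasDerivAt (fun s => Real.exp (k * s)) (Real.exp (k * s) * k) s := by
      simpa using ((hasDerivAt_id s).const_mul k).exp
    exact ((hf s hs).mul hexp).congr_deriv (by ring)
  exact constant_of_has_deriv_right_zero
    (fun s hs => (hderiv s hs.1).continuousAt.continuousWithinAt)
    (fun s hs => (hderiv s hs.1).hasDerivWithinAt) t ⟨ht, le_rfl⟩

theorem tendsto_zero_of_hasDerivAt_neg_mul (hk : 0 < k)
    (hf : ∀ t ≥ t₀, HasDerivAt f (-k * f t) t) :
    Tendsto f atTop (𝓝 0) := by
  have hexp : Tendsto (fun t => f t₀ * Real.exp (k * t₀) * Real.exp (-(k * t))) atTop (𝓝 0) := by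
    simpa using (Real.tendsto_exp_atBot.comp
      (tendsto_neg_atTop_atBot.comp (tendsto_id.const_mul_atTop hk))).const_mul
      (f t₀ * Real.exp (k * t₀))
  refine hexp.congr' ?_
  filter_upwards [eventually_ge_atTop t₀] with t ht
  rw [← mul_exp_eq_of_hasDerivAt_neg_mul hf ht, mul_assoc, ← Real.exp_add, add_neg_cancel,
    Real.exp_zero, mul_one]

theorem tendsto_div_of_hasDerivAt_sub_mul (hk : 0 < k)
    (hf : ∀ t ≥ t₀, HasDerivAt f (a - k * f t) t) :
    Tendsto f atTop (𝓝 (a / k)) := by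
  have hdev : Tendsto (fun t => f t - a / k) atTop (𝓝 0) :=
    tendsto_zero_of_hasDerivAt_neg_mul hk fun t ht =>
      ((hf t ht).sub_const (a / k)).congr_deriv (by field_simp; ring)
  simpa using hdev.add_const (a / k)

end LinearRelaxation

theorem sveitrs_disease_free_subsystem_converges_general
    (Λ μ π θ : ℝ)
    (hμ : 0 < μ) (hπ : 0 < π) (hθ : 0 < θ)
    (S V : ℝ → ℝ)
    (hS : ∀ t ≥ (0 : ℝ), HasDerivAt S (Λ + θ * V t - (π + μ) * S t) t)
    (hV : ∀ t ≥ (0 : ℝ), HasDerivAt V (π * S t - (θ + μ) * V t) t) :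
    Tendsto S atTop (𝓝 (Λ * (θ + μ) / (μ * (θ + π + μ)))) ∧
    Tendsto V atTop (𝓝 (Λ * π / (μ * (θ + π + μ)))) := by
  have hN : Tendsto (fun t => S t + V t) atTop (𝓝 (Λ / μ)) :=
    tendsto_div_of_hasDerivAt_sub_mul hμ fun t ht =>
      ((hS t ht).add (hV t ht)).congr_deriv (by ring)
  have hW : Tendsto (fun t => π * S t - θ * V t) atTop (𝓝 (π * Λ / (θ + π + μ))) :=
    tendsto_div_of_hasDerivAt_sub_mul (by positivity) fun t ht =>
      (((hS t ht).const_mul π).sub ((hV t ht).const_mul θ)).congr_deriv (by ring)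
  have hπθ : π + θ ≠ 0 := by positivity
  have hθπμ : θ + π + μ ≠ 0 := by positivity
  constructor
  · convert ((hN.const_mul θ).add hW).div_const (π + θ) using 2 <;> (field_simp; ring)
  · convert ((hN.const_mul π).sub hW).div_const (π + θ) using 2 <;> (field_simp; ring)

/-- Global convergence of the disease-free subsystem of the SVEITRS
tuberculosis model: every differentiable solution of
`S' = Λ + θV − (π+μ)S`, `V' = πS − (θ+μ)V` converges to the disease-free
equilibrium `(Λ(θ+μ)/(μ(θ+π+μ)), Λπ/(μ(θ+π+μ)))` as `t → ∞`. -/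
theorem sveitrs_disease_free_subsystem_converges
    (Λ μ π θ : ℝ)
    (hΛ : 0 < Λ) (hμ : 0 < μ) (hπ : 0 < π) (hθ : 0 < θ)
    (S V : ℝ → ℝ)
    (hS : ∀ t ≥ (0 : ℝ), HasDerivAt S (Λ + θ * V t - (π + μ) * S t) t)
    (hV : ∀ t ≥ (0 : ℝ), HasDerivAt V (π * S t - (θ + μ) * V t) t) :
    Tendsto S atTop (𝓝 (Λ * (θ + μ) / (μ * (θ + π + μ)))) ∧
    Tendsto V atTop (𝓝 (Λ * π / (μ * (θ + π + μ)))) :=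
  sveitrs_disease_free_subsystem_converges_general Λ μ π θ hμ hπ hθ S V hS hV
end

section
/- If R_v > 1, then the SVEITRS system has an equilibrium point (S*, V*, E*, I*, T*, R*) (all six right-hand sides vanish) with all six coordinates strictly positive, and at this equilibrium S* = (γ+μ)(δ+τ+μ)/(βγ). -/
/-!
At an equilibrium the `V`, `T`, `R` equations give those compartments linearly in `S` and `I`, and
the `E`, `I` equations force `β γ S = (γ+μ)(δ+τ+μ)` once `I ≠ 0`. With this `S*` the `S` equation
becomes the linear equation
`(θ+μ)(β S* (η+μ)(α+ω+μ) - η α δ) I = (Λ(θ+μ) - μ(θ+π+μ) S*) (η+μ)(α+ω+μ)`.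
Its coefficient is positive because only a fraction `η α / ((η+μ)(α+ω+μ)) < 1` of the treated
flow `δ I` returns to `S`, and `β S* > δ`; its right-hand side is positive exactly when `R_v > 1`.
-/

namespace SVEITRS

variable {Λ β γ μ π η θ δ τ α ω S V I T R : ℝ}

noncomputable def endemicSusceptible (β γ μ δ τ : ℝ) : ℝ :=
  (γ + μ) * (δ + τ + μ) / (β * γ)

lemma beta_mul_endemicSusceptible (hβ : β ≠ 0) (hγ : γ ≠ 0) :
    β * endemicSusceptible β γ μ δ τ = (γ + μ) * (δ + τ + μ) / γ := by
  unfold endemicSusceptible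
  field_simp

lemma endemicSusceptible_pos (hβ : 0 < β) (hγ : 0 < γ) (hμ : 0 < μ) (hδ : 0 ≤ δ) (hτ : 0 ≤ τ) :
    0 < endemicSusceptible β γ μ δ τ := by
  unfold endemicSusceptible
  positivity

lemma lt_beta_mul_endemicSusceptible (hβ : 0 < β) (hγ : 0 < γ) (hμ : 0 < μ) (hδ : 0 ≤ δ)
    (hτ : 0 ≤ τ) : δ < β * endemicSusceptible β γ μ δ τ := by
  rw [beta_mul_endemicSusceptible hβ.ne' hγ.ne', lt_div_iff₀ hγ]
  nlinarith

lemma eta_mul_alpha_mul_delta_lt (hβ : 0 < β) (hγ : 0 < γ) (hμ : 0 < μ) (hη : 0 ≤ η)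
    (hδ : 0 ≤ δ) (hτ : 0 ≤ τ) (hα : 0 ≤ α) (hω : 0 ≤ ω) :
    η * α * δ < β * endemicSusceptible β γ μ δ τ * ((η + μ) * (α + ω + μ)) := by
  have hδS := lt_beta_mul_endemicSusceptible (μ := μ) hβ hγ hμ hδ hτ
  calc η * α * δ = δ * (η * α) := by ring
    _ ≤ δ * ((η + μ) * (α + ω + μ)) := by gcongr <;> linarith
    _ < β * endemicSusceptible β γ μ δ τ * ((η + μ) * (α + ω + μ)) := by gcongr

lemma mul_endemicSusceptible_lt (hβ : 0 < β) (hγ : 0 < γ) (hμ : 0 < μ) (hπ : 0 ≤ π)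
    (hθ : 0 ≤ θ) (hδ : 0 ≤ δ) (hτ : 0 ≤ τ)
    (hRv : 1 < Λ * β * γ * (θ + μ) / (μ * (θ + π + μ) * (δ + τ + μ) * (γ + μ))) :
    μ * (θ + π + μ) * endemicSusceptible β γ μ δ τ < Λ * (θ + μ) := by
  rw [one_lt_div (by positivity)] at hRv
  unfold endemicSusceptible
  rw [← mul_div_assoc, div_lt_iff₀ (by positivity)]
  linarith

lemma susceptible_flow_eq_zero (hθμ : θ + μ ≠ 0) (hημ : η + μ ≠ 0) (hαωμ : α + ω + μ ≠ 0)
    (hV : (θ + μ) * V = π * S) (hT : (α + ω + μ) * T = δ * I) (hR : (η + μ) * R = α * T)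
    (hI : (θ + μ) * (β * S * ((η + μ) * (α + ω + μ)) - η * α * δ) * I =
      (Λ * (θ + μ) - μ * (θ + π + μ) * S) * ((η + μ) * (α + ω + μ))) :
    Λ + η * R + θ * V - (β * I + π + μ) * S = 0 := by
  have key : (θ + μ) * (η + μ) * (α + ω + μ) * (Λ + η * R + θ * V - (β * I + π + μ) * S) = 0 := by
    linear_combination -hI + θ * (η + μ) * (α + ω + μ) * hV + η * α * (θ + μ) * hT +
      η * (θ + μ) * (α + ω + μ) * hR
  exact (mul_eq_zero.mp key).resolve_left (mul_ne_zero (mul_ne_zero hθμ hημ) hαωμ)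

end SVEITRS

open SVEITRS in
theorem sveitrs_endemic_equilibrium_exists_general
    (Λ β γ μ π η θ δ τ α ω : ℝ)
    (hβ : 0 < β) (hγ : 0 < γ) (hμ : 0 < μ) (hπ : 0 < π)
    (hη : 0 < η) (hθ : 0 < θ) (hδ : 0 < δ) (hτ : 0 < τ) (hα : 0 < α) (hω : 0 < ω)
    (Rv : ℝ)
    (hRv : Rv = Λ * β * γ * (θ + μ) /
      (μ * (θ + π + μ) * (δ + τ + μ) * (γ + μ)))
    (hRv1 : 1 < Rv) :
    ∃ S V E I T R : ℝ,
      Λ + η * R + θ * V - (β * I + π + μ) * S = 0 ∧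
      π * S - (θ + μ) * V = 0 ∧
      β * S * I - (γ + μ) * E = 0 ∧
      γ * E - (δ + τ + μ) * I = 0 ∧
      δ * I - (α + ω + μ) * T = 0 ∧
      α * T - (η + μ) * R = 0 ∧
      0 < S ∧ 0 < V ∧ 0 < E ∧ 0 < I ∧ 0 < T ∧ 0 < R ∧
      S = (γ + μ) * (δ + τ + μ) / (β * γ) := by
  subst hRv
  obtain ⟨S, hS_def⟩ : ∃ S, S = endemicSusceptible β γ μ δ τ := ⟨_, rfl⟩
  have hS : 0 < S := hS_def ▸ endemicSusceptible_pos hβ hγ hμ hδ.le hτ.le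
  have hβS : β * S = (γ + μ) * (δ + τ + μ) / γ :=
    hS_def ▸ beta_mul_endemicSusceptible hβ.ne' hγ.ne'
  have hcoef : 0 < (θ + μ) * (β * S * ((η + μ) * (α + ω + μ)) - η * α * δ) :=
    mul_pos (by positivity) <| sub_pos.2 <|
      hS_def ▸ eta_mul_alpha_mul_delta_lt hβ hγ hμ hη.le hδ.le hτ.le hα.le hω.le
  have hsupply : 0 < (Λ * (θ + μ) - μ * (θ + π + μ) * S) * ((η + μ) * (α + ω + μ)) :=
    mul_pos (sub_pos.2 <| hS_def ▸ mul_endemicSusceptible_lt hβ hγ hμ hπ.le hθ.le hδ.le hτ.le hRv1)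
      (by positivity)
  obtain ⟨I, hI⟩ : ∃ I, (θ + μ) * (β * S * ((η + μ) * (α + ω + μ)) - η * α * δ) * I =
      (Λ * (θ + μ) - μ * (θ + π + μ) * S) * ((η + μ) * (α + ω + μ)) :=
    ⟨_, mul_div_cancel₀ _ hcoef.ne'⟩
  have hIpos : 0 < I := pos_of_mul_pos_right (hI ▸ hsupply) hcoef.le
  refine ⟨S, π * S / (θ + μ), (δ + τ + μ) * I / γ, I, δ * I / (α + ω + μ),
    α * (δ * I / (α + ω + μ)) / (η + μ), ?_, ?_, ?_, ?_, ?_, ?_, hS, by positivity,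
    by positivity, hIpos, by positivity, by positivity, hS_def⟩
  · refine susceptible_flow_eq_zero (T := δ * I / (α + ω + μ)) (by positivity) (by positivity)
      (by positivity) ?_ ?_ ?_ hI <;> field_simp
  · field_simp; ring
  · rw [hβS]; field_simp; ring
  · field_simp; ring
  · field_simp; ring
  · field_simp; ring

/-- Existence of a (strictly positive) endemic equilibrium of the SVEITRS
tuberculosis model when `R_v > 1`, with susceptible coordinate
`S* = (γ+μ)(δ+τ+μ)/(βγ)`. -/
theorem sveitrs_endemic_equilibrium_exists
    (Λ β γ μ π η θ δ τ α ω : ℝ)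
    (hΛ : 0 < Λ) (hβ : 0 < β) (hγ : 0 < γ) (hμ : 0 < μ) (hπ : 0 < π)
    (hη : 0 < η) (hθ : 0 < θ) (hδ : 0 < δ) (hτ : 0 < τ) (hα : 0 < α) (hω : 0 < ω)
    (Rv : ℝ)
    (hRv : Rv = Λ * β * γ * (θ + μ) /
      (μ * (θ + π + μ) * (δ + τ + μ) * (γ + μ)))
    (hRv1 : 1 < Rv) :
    ∃ S V E I T R : ℝ,
      Λ + η * R + θ * V - (β * I + π + μ) * S = 0 ∧
      π * S - (θ + μ) * V = 0 ∧
      β * S * I - (γ + μ) * E = 0 ∧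
      γ * E - (δ + τ + μ) * I = 0 ∧
      δ * I - (α + ω + μ) * T = 0 ∧
      α * T - (η + μ) * R = 0 ∧
      0 < S ∧ 0 < V ∧ 0 < E ∧ 0 < I ∧ 0 < T ∧ 0 < R ∧
      S = (γ + μ) * (δ + τ + μ) / (β * γ) :=
  sveitrs_endemic_equilibrium_exists_general Λ β γ μ π η θ δ τ α ω hβ hγ hμ hπ hη hθ hδ hτ hα hω Rv
    hRv hRv1
end

section
/- If R_v ≤ 1, then the SVEITRS system has no equilibrium point (S, V, E, I, T, R) with S > 0 and I > 0; i.e., no endemic equilibrium exists when the effective reproduction number is at most one. -/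
/-!
At an equilibrium with `I > 0`, the `E`- and `I`-equations pin the susceptible level to
`S* = (γ + μ)(δ + τ + μ) / (βγ)`, and `R_v ≤ 1` says exactly that the disease-free level
`Λ(θ + μ) / (μ(θ + π + μ))` is at most `S*`. Eliminating `V`, the `S`-equation then shows that
new infections `βIS` are at most the relapse flow `ηR`. But following the chain
`S → E → I → T → R → S`, each stage loses a positive fraction of its inflow, so `ηR` is strictly smaller than the infection flow `βIS` that feeds it.
-/

section SVEITRS

variable {Λ β γ μ π η θ δ τ α ω S V E I T R : ℝ}

theorem susceptible_eq_of_infected_balance (hE : β * S * I - (γ + μ) * E = 0)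
    (hI : γ * E - (δ + τ + μ) * I = 0) (hI₀ : I ≠ 0) :
    β * γ * S = (γ + μ) * (δ + τ + μ) :=
  mul_right_cancel₀ hI₀ (by linear_combination γ * hE + (γ + μ) * hI)

theorem recovered_eq_of_treated_balance (hT : δ * I - (α + ω + μ) * T = 0)
    (hR : α * T - (η + μ) * R = 0) :
    (α + ω + μ) * (η + μ) * R = α * δ * I := by
  linear_combination -α * hT - (α + ω + μ) * hR

theorem disease_free_le_of_reproduction_number_le_one (hβ : 0 < β) (hγ : 0 < γ) (hμ : 0 < μ)
    (hπ : 0 < π) (hθ : 0 < θ) (hδ : 0 < δ) (hτ : 0 < τ)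
    (hS : β * γ * S = (γ + μ) * (δ + τ + μ))
    (hRv : Λ * β * γ * (θ + μ) / (μ * (θ + π + μ) * (δ + τ + μ) * (γ + μ)) ≤ 1) :
    Λ * (θ + μ) ≤ μ * (θ + π + μ) * S := by
  rw [div_le_one (by positivity)] at hRv
  have hβγ : 0 < β * γ := by positivity
  refine le_of_mul_le_mul_right ?_ hβγ
  linear_combination hRv - μ * (θ + π + μ) * hS

theorem infection_le_relapse_of_disease_free_le (hθμ : 0 < θ + μ)
    (hS : Λ + η * R + θ * V - (β * I + π + μ) * S = 0) (hV : π * S - (θ + μ) * V = 0)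
    (hS₀ : Λ * (θ + μ) ≤ μ * (θ + π + μ) * S) :
    β * I * S ≤ η * R :=
  le_of_mul_le_mul_right (by linear_combination -(θ + μ) * hS - θ * hV + hS₀) hθμ

theorem relapse_cycle_product_lt (hγ : 0 < γ) (hμ : 0 < μ) (hη : 0 < η) (hδ : 0 < δ) (hτ : 0 < τ)
    (hα : 0 < α) (hω : 0 < ω) :
    γ * δ * α * η < (γ + μ) * (δ + τ + μ) * (α + ω + μ) * (η + μ) := by
  gcongr <;> linarith

end SVEITRS

theorem sveitrs_no_endemic_equilibrium_general
    (Λ β γ μ π η θ δ τ α ω : ℝ)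
    (hβ : 0 < β) (hγ : 0 < γ) (hμ : 0 < μ) (hπ : 0 < π)
    (hη : 0 < η) (hθ : 0 < θ) (hδ : 0 < δ) (hτ : 0 < τ) (hα : 0 < α) (hω : 0 < ω)
    (Rv : ℝ)
    (hRv : Rv = Λ * β * γ * (θ + μ) /
      (μ * (θ + π + μ) * (δ + τ + μ) * (γ + μ)))
    (hRv1 : Rv ≤ 1) :
    ¬ ∃ S V E I T R : ℝ,
      Λ + η * R + θ * V - (β * I + π + μ) * S = 0 ∧
      π * S - (θ + μ) * V = 0 ∧
      β * S * I - (γ + μ) * E = 0 ∧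
      γ * E - (δ + τ + μ) * I = 0 ∧
      δ * I - (α + ω + μ) * T = 0 ∧
      α * T - (η + μ) * R = 0 ∧
      0 < S ∧ 0 < I := by
  rintro ⟨S, V, E, I, T, R, hS, hV, hE, hI, hT, hR, -, hI₀⟩
  subst hRv
  have hSend := susceptible_eq_of_infected_balance hE hI hI₀.ne'
  have hS₀ := disease_free_le_of_reproduction_number_le_one hβ hγ hμ hπ hθ hδ hτ hSend hRv1
  have hflow := infection_le_relapse_of_disease_free_le (by positivity) hS hV hS₀
  have hRI := recovered_eq_of_treated_balance hT hR
  have hcycle : (γ + μ) * (δ + τ + μ) * (α + ω + μ) * (η + μ) * I ≤ γ * δ * α * η * I := by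
    linear_combination γ * (α + ω + μ) * (η + μ) * hflow
      - (α + ω + μ) * (η + μ) * I * hSend + γ * η * hRI
  exact (mul_lt_mul_of_pos_right (relapse_cycle_product_lt hγ hμ hη hδ hτ hα hω) hI₀).not_ge hcycle

/-- Nonexistence of an endemic equilibrium of the SVEITRS tuberculosis model
when `R_v ≤ 1`: no equilibrium has both `S > 0` and `I > 0`. -/
theorem sveitrs_no_endemic_equilibrium
    (Λ β γ μ π η θ δ τ α ω : ℝ)
    (hΛ : 0 < Λ) (hβ : 0 < β) (hγ : 0 < γ) (hμ : 0 < μ) (hπ : 0 < π)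
    (hη : 0 < η) (hθ : 0 < θ) (hδ : 0 < δ) (hτ : 0 < τ) (hα : 0 < α) (hω : 0 < ω)
    (Rv : ℝ)
    (hRv : Rv = Λ * β * γ * (θ + μ) /
      (μ * (θ + π + μ) * (δ + τ + μ) * (γ + μ)))
    (hRv1 : Rv ≤ 1) :
    ¬ ∃ S V E I T R : ℝ,
      Λ + η * R + θ * V - (β * I + π + μ) * S = 0 ∧
      π * S - (θ + μ) * V = 0 ∧
      β * S * I - (γ + μ) * E = 0 ∧
      γ * E - (δ + τ + μ) * I = 0 ∧
      δ * I - (α + ω + μ) * T = 0 ∧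
      α * T - (η + μ) * R = 0 ∧
      0 < S ∧ 0 < I :=
  sveitrs_no_endemic_equilibrium_general Λ β γ μ π η θ δ τ α ω hβ hγ hμ hπ hη hθ hδ hτ hα hω Rv hRv
    hRv1
end

section
/- Let Λ, β, γ, μ, π, θ, δ, τ be positive reals and regard R_v = Λβγ(θ+μ)/(μ(θ+π+μ)(δ+τ+μ)(γ+μ)) as a function of μ. The normalized sensitivity index with respect to μ satisfies Υ_μ = (∂R_v/∂μ)·(μ/R_v) = −[θ/(θ+μ) + μ/(θ+π+μ) + μ/(δ+τ+μ) + μ/(γ+μ)], which is strictly negative. -/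
/-!
The normalized sensitivity index `∂R_v/∂μ · μ / R_v` is `μ` times the logarithmic derivative
of `R_v`, and the logarithmic derivative turns the product/quotient `R_v` into a signed sum of
the logarithmic derivatives `1 / (c + μ)` of its linear factors. Multiplying by `μ`, the
numerator factor `θ + μ` and the factor `μ` of the denominator combine to
`μ / (θ + μ) - 1 = -θ / (θ + μ)`; every remaining term is positive.
-/

section

variable {𝕜 : Type*} [NontriviallyNormedField 𝕜]

theorem logDeriv_const_add_id (c x : 𝕜) : logDeriv (fun z => c + z) x = 1 / (c + x) := by
  simp [logDeriv_apply]

theorem logDeriv_const_mul_add_div_mul_add (k a b c d x : 𝕜) (hk : k ≠ 0) (hx : x ≠ 0)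
    (ha : a + x ≠ 0) (hb : b + x ≠ 0) (hc : c + x ≠ 0) (hd : d + x ≠ 0) :
    logDeriv (fun z => k * (a + z) / (z * (b + z) * (c + z) * (d + z))) x =
      1 / (a + x) - (1 / x + 1 / (b + x) + 1 / (c + x) + 1 / (d + x)) := by
  rw [logDeriv_div, logDeriv_const_mul, logDeriv_const_add_id, logDeriv_mul, logDeriv_mul,
    logDeriv_mul, logDeriv_id', logDeriv_const_add_id, logDeriv_const_add_id,
    logDeriv_const_add_id]
  all_goals first | fun_prop | simp [*]

end

/-- Sensitivity index of the effective reproduction number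
`R_v = Λβγ(θ+μ)/(μ(θ+π+μ)(δ+τ+μ)(γ+μ))` with respect to the natural death
rate `μ`: `Υ_μ = −[θ/(θ+μ) + μ/(θ+π+μ) + μ/(δ+τ+μ) + μ/(γ+μ)]`, which is
strictly negative. -/
theorem sveitrs_sensitivity_mu
    (Λ β γ μ π θ δ τ : ℝ)
    (hΛ : 0 < Λ) (hβ : 0 < β) (hγ : 0 < γ) (hμ : 0 < μ) (hπ : 0 < π)
    (hθ : 0 < θ) (hδ : 0 < δ) (hτ : 0 < τ)
    (Rv : ℝ)
    (hRv : Rv = Λ * β * γ * (θ + μ) /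
      (μ * (θ + π + μ) * (δ + τ + μ) * (γ + μ))) :
    deriv (fun x => Λ * β * γ * (θ + x) /
        (x * (θ + π + x) * (δ + τ + x) * (γ + x))) μ * (μ / Rv) =
      -(θ / (θ + μ) + μ / (θ + π + μ) + μ / (δ + τ + μ) + μ / (γ + μ)) ∧
    -(θ / (θ + μ) + μ / (θ + π + μ) + μ / (δ + τ + μ) + μ / (γ + μ)) < 0 := by
  subst hRv
  set Rv := fun x => Λ * β * γ * (θ + x) / (x * (θ + π + x) * (δ + τ + x) * (γ + x))
  have hindex : deriv Rv μ * (μ / Rv μ) = μ * logDeriv Rv μ := by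
    rw [logDeriv_apply]
    ring
  have hlog := logDeriv_const_mul_add_div_mul_add (Λ * β * γ) θ (θ + π) (δ + τ) γ μ
    (by positivity) hμ.ne' (by positivity) (by positivity) (by positivity) (by positivity)
  refine ⟨?_, ?_⟩
  · rw [hindex, hlog]
    field_simp
    ring
  · have : 0 < θ / (θ + μ) + μ / (θ + π + μ) + μ / (δ + τ + μ) + μ / (γ + μ) := by positivity
    linarith
end
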